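/- Let F and G be Lipschitz with constants L_F and L_G in the entrywise sup-norm, with 0 < L_F < 1/γ_F and 0 < L_G < 1/γ_G. For ξ = (k,ℓ,i,j), define R^{(i,j)}(A,B) := B + (γ_F F_{i,j}(A) − B_{i,j}) E^{i,j} and S^{(k,ℓ)}(A,B) := A + α (γ_G G_{k,ℓ}(B) − A_{k,ℓ}) E^{k,ℓ}, where α ∈ (0,1) and E^{i,j} is the matrix with a single 1 in entry (i,j). Then the operator T^ξ(A,B) := (S^{(k,ℓ)}(A, R^{(i,j)}(A,B)), R^{(i,j)}(A,B)) is nonexpansive on ℝ^{m×m} × ℝ^{n×n} with respect to the norm ‖(A,B)‖_∞ := max{‖A‖_∞, ‖B‖_∞}. -/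

import Mathlib

/-- Entrywise sup-norm of a matrix. -/
noncomputable def supNorm {m n : ℕ} (A : Matrix (Fin m) (Fin n) ℝ) : ℝ :=
  ‖(fun i j => A i j : Fin m → Fin n → ℝ)‖

/-- Single-entry update of `B` using `F`. -/
noncomputable def Rop {m n : ℕ} (F : Matrix (Fin m) (Fin m) ℝ → Matrix (Fin n) (Fin n) ℝ)
    (γF : ℝ) (i j : Fin n) (A : Matrix (Fin m) (Fin m) ℝ) (B : Matrix (Fin n) (Fin n) ℝ) :
    Matrix (Fin n) (Fin n) ℝ :=
  B + (γF * F A i j - B i j) • Matrix.single i j (1 : ℝ)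

/-- Single-entry relaxed update of `A` using `G`. -/
noncomputable def Sop {m n : ℕ} (G : Matrix (Fin n) (Fin n) ℝ → Matrix (Fin m) (Fin m) ℝ)
    (γG α : ℝ) (k l : Fin m) (A : Matrix (Fin m) (Fin m) ℝ) (B : Matrix (Fin n) (Fin n) ℝ) :
    Matrix (Fin m) (Fin m) ℝ :=
  A + (α * (γG * G B k l - A k l)) • Matrix.single k l (1 : ℝ)

/-!
Both `Rop` and `Sop` overwrite a single entry, so the sup-distance between two updated matrices is
at most the larger of the old sup-distance and the distance between the new entries. For `Rop` the
new entries `γF * F_{ij}` differ by at most `γF * LF * ‖A - A'‖ ≤ ‖A - A'‖`. For `Sop` the new entry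
is the convex combination `(1 - α) * A_{kl} + α * γG * G_{kl}(R)`; both parts move by at most the
max-norm, the second by the bound already obtained for `Rop`.
-/

section SupNorm

variable {m n : ℕ}

lemma abs_apply_le_supNorm (A : Matrix (Fin m) (Fin n) ℝ) (i : Fin m) (j : Fin n) :
    |A i j| ≤ supNorm A := by
  rw [← Real.norm_eq_abs]
  exact (norm_le_pi_norm (A i) j).trans (norm_le_pi_norm (fun i j => A i j) i)

lemma supNorm_nonneg (A : Matrix (Fin m) (Fin n) ℝ) : 0 ≤ supNorm A :=
  norm_nonneg _

lemma supNorm_le_of_forall_abs_le {A : Matrix (Fin m) (Fin n) ℝ} {c : ℝ} (hc : 0 ≤ c)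
    (h : ∀ i j, |A i j| ≤ c) : supNorm A ≤ c :=
  (pi_norm_le_iff_of_nonneg hc).2 fun i =>
    (pi_norm_le_iff_of_nonneg hc).2 fun j => (Real.norm_eq_abs _).trans_le (h i j)

lemma add_smul_single_apply (B : Matrix (Fin m) (Fin n) ℝ) (i : Fin m) (j : Fin n) (c : ℝ)
    (p : Fin m) (q : Fin n) :
    (B + (c - B i j) • Matrix.single i j (1 : ℝ)) p q = if p = i ∧ q = j then c else B p q := by
  by_cases h : p = i ∧ q = j
  · obtain ⟨rfl, rfl⟩ := h
    simp
  · rw [if_neg h, Matrix.add_apply, Matrix.smul_apply,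
      Matrix.single_apply_of_ne _ _ _ _ _ fun h' => h ⟨h'.1.symm, h'.2.symm⟩, smul_zero, add_zero]

lemma supNorm_add_smul_single_sub_le (B B' : Matrix (Fin m) (Fin n) ℝ) (i : Fin m) (j : Fin n)
    (c c' : ℝ) :
    supNorm ((B + (c - B i j) • Matrix.single i j (1 : ℝ))
        - (B' + (c' - B' i j) • Matrix.single i j (1 : ℝ)))
      ≤ max |c - c'| (supNorm (B - B')) := by
  refine supNorm_le_of_forall_abs_le ((abs_nonneg _).trans (le_max_left _ _)) fun p q => ?_
  rw [Matrix.sub_apply, add_smul_single_apply, add_smul_single_apply]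
  split_ifs
  · exact le_max_left _ _
  · exact (abs_apply_le_supNorm (B - B') p q).trans (le_max_right _ _)

lemma abs_mul_apply_sub_le_of_supNorm_le {P Q : Matrix (Fin m) (Fin n) ℝ} {γ L d : ℝ}
    (hγ : 0 < γ) (hL : L < 1 / γ) (hd : 0 ≤ d) (h : supNorm (P - Q) ≤ L * d)
    (i : Fin m) (j : Fin n) : |γ * P i j - γ * Q i j| ≤ d := by
  have hγL : γ * L ≤ 1 := ((lt_div_iff₀' hγ).1 hL).le
  calc |γ * P i j - γ * Q i j| = γ * |(P - Q) i j| := by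
        rw [Matrix.sub_apply, ← mul_sub, abs_mul, abs_of_pos hγ]
    _ ≤ γ * (L * d) := by gcongr; exact (abs_apply_le_supNorm _ i j).trans h
    _ = (γ * L) * d := by ring
    _ ≤ d := mul_le_of_le_one_left hd hγL

end SupNorm

lemma abs_convexComb_sub_le {α x x' y y' M : ℝ} (hα : 0 ≤ α) (hα1 : α ≤ 1)
    (hx : |x - x'| ≤ M) (hy : |y - y'| ≤ M) :
    |((1 - α) * x + α * y) - ((1 - α) * x' + α * y')| ≤ M :=
  calc |((1 - α) * x + α * y) - ((1 - α) * x' + α * y')|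
      = |(1 - α) * (x - x') + α * (y - y')| := by ring_nf
    _ ≤ (1 - α) * |x - x'| + α * |y - y'| := by
        refine (abs_add_le _ _).trans ?_
        rw [abs_mul, abs_mul, abs_of_nonneg (sub_nonneg.2 hα1), abs_of_nonneg hα]
    _ ≤ (1 - α) * M + α * M := by gcongr
    _ = M := by ring

lemma Sop_eq_add_smul_single {m n : ℕ} (G : Matrix (Fin n) (Fin n) ℝ → Matrix (Fin m) (Fin m) ℝ)
    (γG α : ℝ) (k l : Fin m) (A : Matrix (Fin m) (Fin m) ℝ) (B : Matrix (Fin n) (Fin n) ℝ) :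
    Sop G γG α k l A B
      = A + ((1 - α) * A k l + α * (γG * G B k l) - A k l) • Matrix.single k l (1 : ℝ) := by
  rw [Sop]
  ring_nf

theorem single_entry_update_nonexpansive_general {m n : ℕ}
    (F : Matrix (Fin m) (Fin m) ℝ → Matrix (Fin n) (Fin n) ℝ)
    (G : Matrix (Fin n) (Fin n) ℝ → Matrix (Fin m) (Fin m) ℝ)
    (LF LG γF γG α : ℝ) (hγF : 0 < γF) (hγG : 0 < γG)
    (hα : 0 < α) (hα1 : α < 1)
    (hLF' : LF < 1 / γF)
    (hLG' : LG < 1 / γG)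
    (hF : ∀ A A', supNorm (F A - F A') ≤ LF * supNorm (A - A'))
    (hG : ∀ B B', supNorm (G B - G B') ≤ LG * supNorm (B - B')) :
    ∀ (k l : Fin m) (i j : Fin n)
      (A A' : Matrix (Fin m) (Fin m) ℝ) (B B' : Matrix (Fin n) (Fin n) ℝ),
      max (supNorm (Sop G γG α k l A (Rop F γF i j A B)
                  - Sop G γG α k l A' (Rop F γF i j A' B')))
          (supNorm (Rop F γF i j A B - Rop F γF i j A' B'))
        ≤ max (supNorm (A - A')) (supNorm (B - B')) := by
  intro k l i j A A' B B'
  set M := max (supNorm (A - A')) (supNorm (B - B'))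
  have hA : supNorm (A - A') ≤ M := le_max_left _ _
  have hR : supNorm (Rop F γF i j A B - Rop F γF i j A' B') ≤ M :=
    (supNorm_add_smul_single_sub_le B B' i j _ _).trans <| max_le_max_right _ <|
      abs_mul_apply_sub_le_of_supNorm_le hγF hLF' (supNorm_nonneg _) (hF A A') i j
  have hGkl : |γG * G (Rop F γF i j A B) k l - γG * G (Rop F γF i j A' B') k l| ≤ M :=
    (abs_mul_apply_sub_le_of_supNorm_le hγG hLG' (supNorm_nonneg _) (hG _ _) k l).trans hR
  have hAkl : |A k l - A' k l| ≤ M := (abs_apply_le_supNorm (A - A') k l).trans hA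
  refine max_le ?_ hR
  rw [Sop_eq_add_smul_single, Sop_eq_add_smul_single]
  exact (supNorm_add_smul_single_sub_le A A' k l _ _).trans <|
    max_le (abs_convexComb_sub_le hα.le hα1.le hAkl hGkl) hA

theorem single_entry_update_nonexpansive {m n : ℕ}
    (F : Matrix (Fin m) (Fin m) ℝ → Matrix (Fin n) (Fin n) ℝ)
    (G : Matrix (Fin n) (Fin n) ℝ → Matrix (Fin m) (Fin m) ℝ)
    (LF LG γF γG α : ℝ) (hγF : 0 < γF) (hγG : 0 < γG)
    (hα : 0 < α) (hα1 : α < 1)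
    (hLF : 0 < LF) (hLF' : LF < 1 / γF)
    (hLG : 0 < LG) (hLG' : LG < 1 / γG)
    (hF : ∀ A A', supNorm (F A - F A') ≤ LF * supNorm (A - A'))
    (hG : ∀ B B', supNorm (G B - G B') ≤ LG * supNorm (B - B')) :
    ∀ (k l : Fin m) (i j : Fin n)
      (A A' : Matrix (Fin m) (Fin m) ℝ) (B B' : Matrix (Fin n) (Fin n) ℝ),
      max (supNorm (Sop G γG α k l A (Rop F γF i j A B)
                  - Sop G γG α k l A' (Rop F γF i j A' B')))
          (supNorm (Rop F γF i j A B - Rop F γF i j A' B'))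
        ≤ max (supNorm (A - A')) (supNorm (B - B')) :=
  single_entry_update_nonexpansive_general F G LF LG γF γG α hγF hγG hα hα1 hLF' hLG' hF hG
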